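/- arXiv:2005.01067 — 2 statements merged into one kernel-verified Lean document; each statement's English description precedes it below -/
import Mathlib

section
/- Let s, n, N be positive integers with n ≥ 2 and s·n odd. Then for every j ∈ {0,1,...,N−1}, M_{s,n,N}(j) = ((2i)^{sn+1}/N) · Σ_{r=1}^{⌊N/2⌋} sin(πr(2j − N_{s,n})/N) · ∏_{a=1}^{n} sin^s(πar/N), where i is the imaginary unit and N_{s,n} = s·n(n+1)/2. -/
/-!
By the roots-of-unity filter with `ζ = exp (2πi/N)`, `N · M(j) = ∑_{r < N} ζ^{-jr} T(ζ^r)`.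
Since `1 - e^{2iθ} = -2i sin θ · e^{iθ}`, the `r`-th term is
`(-2i)^{sn} ∏_a sin^s(πar/N) · e^{iψ_r}` with `ψ_r = πr(N_{s,n} - 2j)/N`. As `T` has integer
coefficients and `ζ^{N-r} = conj ζ^r`, the terms `r` and `N - r` are complex conjugate; the term
`r = 0` vanishes because `T(1) = 0`, and for even `N` so does the self-conjugate term `r = N/2`,
because `ζ^{N/2} = -1` and `T(-1) = 0` once `n ≥ 2`. Finally, for odd `sn`,
`(-2i)^{sn} c e^{iψ} + conj (…) = (2i)^{sn+1} c sin(-ψ)`.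
-/

/-- `T s n` is the polynomial `∏_{j=1}^{n} (1 - q^j)^s`. -/
noncomputable def T (s n : ℕ) : Polynomial ℤ :=
  ∏ j ∈ Finset.Icc 1 n, (1 - Polynomial.X ^ j) ^ s

/-- `Nsn s n = s·n(n+1)/2`, the degree of `T s n`. -/
def Nsn (s n : ℕ) : ℕ := s * n * (n + 1) / 2

/-- `M s n N j = Σ_{0 ≤ i ≤ N_{s,n}, i ≡ j (mod N)} t_{i,s,n}`. -/
noncomputable def M (s n N j : ℕ) : ℤ :=
  ∑ i ∈ (Finset.range (Nsn s n + 1)).filter (fun i => i % N = j), (T s n).coeff i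

open Finset Polynomial Complex ComplexConjugate
open scoped Real

theorem Finset.sum_range_eq_sum_Icc_add_reflect {M : Type*} [AddCommMonoid M] {f : ℕ → M}
    {N : ℕ} (h0 : f 0 = 0) (hhalf : Even N → f (N / 2) = 0) :
    ∑ r ∈ range N, f r = ∑ r ∈ Icc 1 (N / 2), (f r + f (N - r)) := by
  rcases N.eq_zero_or_pos with rfl | hN
  · simp
  have hupper : ∑ r ∈ Icc 1 (N / 2), f (N - r) = ∑ r ∈ Ico (N / 2 + 1) N, f r := by
    rw [← Finset.Ico_add_one_right_eq_Icc, sum_Ico_reflect f 1 (by omega), Nat.add_sub_cancel,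
      Nat.add_sub_add_right]
    rcases Nat.even_or_odd N with he | ho
    · rw [show N - N / 2 = N / 2 by grind, sum_eq_sum_Ico_succ_bot (by omega), hhalf he, zero_add]
    · rw [show N - N / 2 = N / 2 + 1 by grind]
  rw [sum_add_distrib, hupper, range_eq_Ico, sum_eq_sum_Ico_succ_bot hN, h0, zero_add, zero_add,
    ← Finset.Ico_add_one_right_eq_Icc, sum_Ico_consecutive _ (by omega) (by omega)]

theorem Nat.dvd_add_sub_iff_mod_eq {N i j : ℕ} (hj : j < N) :
    N ∣ i + (N - j) ↔ i % N = j := by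
  rw [← ZMod.natCast_eq_zero_iff, ← Nat.mod_eq_of_lt hj, ← ZMod.natCast_eq_natCast_iff',
    Nat.mod_eq_of_lt hj]
  push_cast [Nat.cast_sub hj.le, ZMod.natCast_self]
  rw [zero_sub, ← sub_eq_add_neg, sub_eq_zero]

section RootsOfUnityFilter

variable {R : Type*} [CommRing R] [IsDomain R] {ζ : R} {N : ℕ}

theorem IsPrimitiveRoot.geom_sum_pow_eq (hζ : IsPrimitiveRoot ζ N) (m : ℕ) :
    ∑ r ∈ range N, (ζ ^ m) ^ r = if N ∣ m then (N : R) else 0 := by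
  split_ifs with hm
  · simp [(hζ.pow_eq_one_iff_dvd m).2 hm]
  · have hne : ζ ^ m - 1 ≠ 0 := sub_ne_zero.2 fun h => hm ((hζ.pow_eq_one_iff_dvd m).1 h)
    have h := mul_geom_sum (ζ ^ m) N
    rw [← pow_mul, mul_comm m, pow_mul, hζ.pow_eq_one, one_pow, sub_self] at h
    exact (mul_eq_zero.1 h).resolve_left hne

theorem IsPrimitiveRoot.pow_div_two_eq_neg_one (hζ : IsPrimitiveRoot ζ N) (hN : N ≠ 0)
    (he : Even N) : ζ ^ (N / 2) = -1 := by
  have h2dvd := even_iff_two_dvd.1 he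
  have h2 := hζ.pow_of_dvd (by omega) (Nat.div_dvd_of_dvd h2dvd)
  rw [Nat.div_div_self h2dvd hN] at h2
  exact h2.eq_neg_one_of_two_right

theorem IsPrimitiveRoot.sum_pow_mul_aeval {A : Type*} [CommRing A] [Algebra A R]
    (hζ : IsPrimitiveRoot ζ N) {p : A[X]} {D : ℕ} (hp : p.natDegree < D) {j : ℕ}
    (hj : j < N) :
    ∑ r ∈ range N, (ζ ^ r) ^ (N - j) * aeval (ζ ^ r) p =
      N * algebraMap A R (∑ i ∈ (range D).filter (· % N = j), p.coeff i) := by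
  have hterm : ∀ i r, (ζ ^ r) ^ (N - j) * (p.coeff i • (ζ ^ r) ^ i) =
      algebraMap A R (p.coeff i) * (ζ ^ (i + (N - j))) ^ r := fun i r => by
    rw [Algebra.smul_def]; ring
  simp_rw [aeval_eq_sum_range' hp, mul_sum, hterm]
  rw [sum_comm]
  simp_rw [← mul_sum, hζ.geom_sum_pow_eq, Nat.dvd_add_sub_iff_mod_eq hj, map_sum, mul_sum,
    sum_filter]
  refine sum_congr rfl fun i _ => ?_
  split_ifs <;> ring

end RootsOfUnityFilter

theorem Complex.one_sub_exp_two_mul_I (z : ℂ) :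
    1 - exp (2 * z * I) = -2 * I * sin z * exp (z * I) := by
  have hinv : exp (-z * I) * exp (z * I) = 1 := by rw [← exp_add]; simp
  have hsq : exp (2 * z * I) = exp (z * I) ^ 2 := by rw [sq, ← exp_add]; ring_nf
  rw [sin, hsq]
  linear_combination (-1) * hinv + (exp (-z * I) * exp (z * I) - exp (z * I) ^ 2) * I_sq

theorem Complex.add_conj_neg_two_I_pow_mul_exp {m : ℕ} (hm : Odd m) (c ψ : ℝ) :
    (-2 * I) ^ m * c * exp (ψ * I) + conj ((-2 * I) ^ m * c * exp (ψ * I)) =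
      (2 * I) ^ (m + 1) * (Real.sin (-ψ) * c) := by
  have hconj : conj ((-2 * I) ^ m * c * exp (ψ * I)) = (2 * I) ^ m * c * exp (-ψ * I) := by
    simp [← exp_conj, map_ofNat]
  have hodd : (-2 * I) ^ m = -(2 * I) ^ m := by rw [neg_mul, hm.neg_pow]
  rw [hconj, hodd, ofReal_sin, ofReal_neg, sin_neg, sin, pow_succ]
  linear_combination ((2 * I) ^ m * c * (exp (-ψ * I) - exp (ψ * I))) * I_sq

theorem aeval_conj_of_int (p : ℤ[X]) (z : ℂ) : aeval (conj z) p = conj (aeval z p) :=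
  aeval_algHom_apply (starRingEnd ℂ).toIntAlgHom z p

theorem IsPrimitiveRoot.pow_sub_eq_conj {ζ : ℂ} {N r : ℕ} (hζ : IsPrimitiveRoot ζ N)
    (hN : N ≠ 0) (hr : r ≤ N) : ζ ^ (N - r) = conj (ζ ^ r) := by
  rw [← inv_eq_conj (by rw [norm_pow, hζ.norm'_eq_one hN, one_pow]),
    pow_sub₀ _ (hζ.ne_zero hN) hr, hζ.pow_eq_one, one_mul]

theorem sum_Icc_id_mul_two (n : ℕ) : (∑ a ∈ Icc 1 n, a) * 2 = n * (n + 1) := by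
  induction n with
  | zero => simp
  | succ m ih => rw [sum_Icc_succ_top (by omega), add_mul, ih]; ring

theorem Nsn_eq_mul_sum (s n : ℕ) : Nsn s n = s * ∑ a ∈ Icc 1 n, a := by
  rw [Nsn, mul_assoc, ← sum_Icc_id_mul_two, ← mul_assoc, Nat.mul_div_cancel _ two_pos]

theorem natDegree_T_le (s n : ℕ) : (T s n).natDegree ≤ Nsn s n := by
  rw [Nsn_eq_mul_sum, mul_sum]
  refine (natDegree_prod_le _ _).trans (sum_le_sum fun a _ => ?_)
  refine natDegree_pow_le.trans (Nat.mul_le_mul_left s ?_)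
  exact (natDegree_sub_le _ _).trans (by simp)

theorem aeval_T_eq_zero_of_pow_eq_one {A : Type*} [CommRing A] {s n a : ℕ} (hs : 0 < s)
    (ha : a ∈ Icc 1 n) {x : A} (hx : x ^ a = 1) : aeval x (T s n) = 0 := by
  rw [T, map_prod]
  exact prod_eq_zero ha (by simp [hx, hs.ne'])

theorem aeval_T_exp (s n : ℕ) (φ : ℝ) :
    aeval (exp (2 * φ * I)) (T s n) =
      (-2 * I) ^ (s * n) * ((∏ a ∈ Icc 1 n, Real.sin (a * φ) ^ s : ℝ) : ℂ) *
        exp (Nsn s n * φ * I) := by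
  have hfactor : ∀ a ∈ Icc 1 n, (1 - exp (2 * φ * I) ^ a) ^ s =
      (-2 * I) ^ s * (Real.sin (a * φ) : ℂ) ^ s * exp (s * a * φ * I) := fun a _ => by
    rw [← exp_nat_mul, show (a : ℂ) * (2 * φ * I) = 2 * (a * φ) * I by ring,
      one_sub_exp_two_mul_I, mul_pow, mul_pow, ← exp_nat_mul]
    push_cast
    ring_nf
  rw [T, map_prod]
  simp only [map_pow, map_sub, map_one, aeval_X]
  rw [prod_congr rfl hfactor, prod_mul_distrib, prod_mul_distrib, prod_const, Nat.card_Icc,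
    Nat.add_sub_cancel, ← pow_mul, ← exp_sum, Nsn_eq_mul_sum]
  push_cast
  rw [mul_sum, sum_mul, sum_mul]

theorem exp_pow_sub_mul_aeval_T (s n : ℕ) {N j : ℕ} (hN : N ≠ 0) (hj : j ≤ N) (r : ℕ) :
    (exp (2 * π * I / N) ^ r) ^ (N - j) * aeval (exp (2 * π * I / N) ^ r) (T s n) =
      (-2 * I) ^ (s * n) * ((∏ a ∈ Icc 1 n, Real.sin (π * a * r / N) ^ s : ℝ) : ℂ) *
        exp (((Nsn s n - 2 * j) * (π * r / N) : ℝ) * I) := by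
  have hζr : exp (2 * π * I / N) ^ r = exp (2 * (π * r / N : ℝ) * I) := by
    rw [← exp_nat_mul]; push_cast; ring_nf
  have hζrN : (exp (2 * π * I / N) ^ r) ^ N = 1 := by
    rw [← pow_mul, mul_comm r N, pow_mul, (isPrimitiveRoot_exp N hN).pow_eq_one, one_pow]
  have hprod : ∏ a ∈ Icc 1 n, Real.sin (a * (π * r / N)) ^ s =
      ∏ a ∈ Icc 1 n, Real.sin (π * a * r / N) ^ s :=
    prod_congr rfl fun a _ => by congr 2; ring
  rw [pow_sub₀ _ (pow_ne_zero _ (exp_ne_zero _)) hj, hζrN, one_mul, hζr, aeval_T_exp, hprod,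
    ← exp_nat_mul, ← exp_neg, mul_left_comm, ← exp_add]
  congr 2
  push_cast
  ring

open Real Complex in
/-- Theorem (main0000, odd case): for `s·n` odd, `n ≥ 2`, `N ≥ 1` and `0 ≤ j < N`,
`M_{s,n,N}(j) = ((2i)^{sn+1}/N) Σ_{r=1}^{⌊N/2⌋} sin(πr(2j - N_{s,n})/N) ∏_{a=1}^{n} sin^s(πar/N)`. -/
theorem stmt1 (s n N : ℕ) (hs : 0 < s) (hn : 2 ≤ n) (hN : 0 < N) (hodd : Odd (s * n))
    (j : ℕ) (hj : j < N) :
    (M s n N j : ℂ) =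
      ((2 * Complex.I) ^ (s * n + 1) / (N : ℂ)) *
        ∑ r ∈ Finset.Icc 1 (N / 2),
          ((Real.sin (Real.pi * r * (2 * (j : ℝ) - (Nsn s n : ℝ)) / N) : ℂ) *
            ∏ a ∈ Finset.Icc 1 n, (Real.sin (Real.pi * a * r / N) : ℂ) ^ s) := by
  have hζ := isPrimitiveRoot_exp N hN.ne'
  set ζ := exp (2 * π * I / N)
  set f : ℕ → ℂ := fun r => (ζ ^ r) ^ (N - j) * aeval (ζ ^ r) (T s n)
  have hfilter : (N : ℂ) * M s n N j = ∑ r ∈ range N, f r := by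
    rw [hζ.sum_pow_mul_aeval (Nat.lt_succ_of_le (natDegree_T_le s n)) hj, M]
    push_cast
    rfl
  have hzero : f 0 = 0 := by
    simp only [f, pow_zero, one_pow, one_mul]
    exact aeval_T_eq_zero_of_pow_eq_one hs (a := 1) (by simp; omega) (one_pow 1)
  have hhalf : Even N → f (N / 2) = 0 := fun he => by
    simp only [f, hζ.pow_div_two_eq_neg_one hN.ne' he]
    rw [aeval_T_eq_zero_of_pow_eq_one hs (a := 2) (by simp; omega) neg_one_sq, mul_zero]
  have hpair : ∀ r ∈ Icc 1 (N / 2), f r + f (N - r) =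
      (2 * I) ^ (s * n + 1) * ((Real.sin (π * r * (2 * (j : ℝ) - (Nsn s n : ℝ)) / N) : ℂ) *
        ∏ a ∈ Icc 1 n, (Real.sin (π * a * r / N) : ℂ) ^ s) := fun r hr => by
    simp only [f]
    rw [hζ.pow_sub_eq_conj hN.ne' (by grind), aeval_conj_of_int, ← map_pow, ← map_mul,
      exp_pow_sub_mul_aeval_T s n hN.ne' hj.le, add_conj_neg_two_I_pow_mul_exp hodd]
    push_cast
    congr 3
    ring
  rw [div_mul_eq_mul_div, eq_div_iff (by exact_mod_cast hN.ne'), mul_comm, hfilter,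
    sum_range_eq_sum_Icc_add_reflect hzero hhalf, sum_congr rfl hpair, mul_sum]
end

section
/- Let s and n be positive integers with s·n odd, let N be a positive integer with N − 1 ≤ N_{s,n}, and let j ∈ {0,1,...,N−1} satisfy 2j ≡ N_{s,n} (mod N). Then M_{s,n,N}(j) = Σ_{0 ≤ i ≤ N_{s,n}, i ≡ j (mod N)} t_{i,s,n} = 0. -/
open Polynomial Finset

namespace Polynomial

variable {R : Type*} [CommSemiring R]

theorem reflect_pow_of_natDegree_le {f : R[X]} {F : ℕ} (hf : f.natDegree ≤ F) (k : ℕ) :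
    (f ^ k).reflect (k * F) = f.reflect F ^ k := by
  induction k with
  | zero => simp [reflect_one]
  | succ k ih =>
    rw [pow_succ, pow_succ, ← ih, Nat.succ_mul,
      reflect_mul _ _ (natDegree_pow_le.trans (Nat.mul_le_mul_left k hf)) hf]

theorem reflect_prod_of_natDegree_le {ι : Type*} {t : Finset ι} {f : ι → R[X]} {d : ι → ℕ}
    (hf : ∀ i ∈ t, (f i).natDegree ≤ d i) :
    (∏ i ∈ t, f i).reflect (∑ i ∈ t, d i) = ∏ i ∈ t, (f i).reflect (d i) := by
  induction t using Finset.cons_induction with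
  | empty => simp [reflect_one]
  | cons a t ha ih =>
    have ht : ∀ i ∈ t, (f i).natDegree ≤ d i := fun i hi => hf i (mem_cons_of_mem hi)
    rw [prod_cons, prod_cons, sum_cons,
      reflect_mul _ _ (hf a (mem_cons_self a t))
        ((natDegree_prod_le t f).trans (sum_le_sum ht)),
      ih ht]

end Polynomial

theorem natDegree_one_sub_X_pow_le {R : Type*} [CommRing R] (j : ℕ) :
    (1 - X ^ j : R[X]).natDegree ≤ j :=
  (natDegree_sub_le _ _).trans (by simpa using natDegree_X_pow_le j)

theorem reflect_one_sub_X_pow {R : Type*} [CommRing R] (j : ℕ) :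
    (1 - X ^ j : R[X]).reflect j = -(1 - X ^ j) := by
  rw [reflect_sub, reflect_one, reflect_monomial, revAt_le le_rfl, Nat.sub_self, pow_zero,
    neg_sub]

theorem Nsn_eq_sum (s n : ℕ) : Nsn s n = ∑ j ∈ Icc 1 n, s * j := by
  have h : 2 * ∑ j ∈ Icc 1 n, s * j = s * n * (n + 1) := by
    induction n with
    | zero => simp
    | succ n ih =>
      rw [sum_Icc_succ_top (by omega), mul_add, ih]
      ring
  unfold Nsn
  omega

theorem reflect_T (s n : ℕ) : (T s n).reflect (Nsn s n) = (-1) ^ (s * n) * T s n := by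
  have hfactor : ∀ j ∈ Icc 1 n,
      ((1 - X ^ j : ℤ[X]) ^ s).reflect (s * j) = (-1) ^ s * (1 - X ^ j) ^ s := fun j _ => by
    rw [reflect_pow_of_natDegree_le (natDegree_one_sub_X_pow_le j), reflect_one_sub_X_pow,
      neg_eq_neg_one_mul, mul_pow]
  rw [Nsn_eq_sum, T, reflect_prod_of_natDegree_le fun j _ =>
      natDegree_pow_le.trans (Nat.mul_le_mul_left s (natDegree_one_sub_X_pow_le j)),
    prod_congr rfl hfactor, prod_mul_distrib, prod_const, Nat.card_Icc, Nat.add_sub_cancel,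
    ← pow_mul]

theorem coeff_T_Nsn_sub {s n : ℕ} (hodd : Odd (s * n)) {i : ℕ} (hi : i ≤ Nsn s n) :
    (T s n).coeff (Nsn s n - i) = -(T s n).coeff i := by
  have h := coeff_reflect (Nsn s n) (T s n) i
  rw [reflect_T, hodd.neg_one_pow, neg_one_mul, coeff_neg, revAt_le hi] at h
  exact h.symm

theorem Nat.sub_mod_eq_of_two_mul_modEq {d N i j : ℕ} (hi : i ≤ d) (hij : i % N = j)
    (hj : 2 * j ≡ d [MOD N]) : (d - i) % N = j := by
  have hi' : i ≡ j [MOD N] := by rw [Nat.ModEq, hij, ← hij, Nat.mod_mod]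
  have hsum : d - i + i ≡ j + i [MOD N] := by
    rw [Nat.sub_add_cancel hi]
    exact hj.symm.trans (by rw [two_mul]; exact Nat.ModEq.add_left j hi'.symm)
  rw [Nat.ModEq.add_right_cancel' i hsum, ← hij, Nat.mod_mod]

theorem sum_filter_mod_eq_zero_of_antisymm {G : Type*} [AddCommGroup G] [IsAddTorsionFree G]
    {f : ℕ → G} {d N j : ℕ} (hf : ∀ i ≤ d, f (d - i) = -f i) (hj : 2 * j ≡ d [MOD N]) :
    ∑ i ∈ (range (d + 1)).filter (fun i => i % N = j), f i = 0 := by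
  set A := (range (d + 1)).filter (fun i => i % N = j)
  have hA : ∀ i ∈ A, i ≤ d ∧ i % N = j := fun i hi => by
    rw [mem_filter, mem_range] at hi
    omega
  have hmaps : ∀ i ∈ A, d - i ∈ A := fun i hi => by
    obtain ⟨hle, hmod⟩ := hA i hi
    exact mem_filter.mpr ⟨mem_range.mpr (by omega), Nat.sub_mod_eq_of_two_mul_modEq hle hmod hj⟩
  have hinv : ∀ i ∈ A, d - (d - i) = i := fun i hi => by have := (hA i hi).1; omega
  refine self_eq_neg.mp ?_
  calc ∑ i ∈ A, f i = ∑ i ∈ A, f (d - i) :=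
        sum_nbij' (d - ·) (d - ·) hmaps hmaps hinv hinv fun i hi => by rw [hinv i hi]
    _ = -∑ i ∈ A, f i := by
        rw [← sum_neg_distrib]
        exact sum_congr rfl fun i hi => hf i (hA i hi).1

theorem stmt3_general (s n N : ℕ) (hodd : Odd (s * n)) (j : ℕ) (hcong : 2 * j ≡ Nsn s n [MOD N]) :
    M s n N j = 0 :=
  sum_filter_mod_eq_zero_of_antisymm (fun _ hi => coeff_T_Nsn_sub hodd hi) hcong

/-- Theorem (main000): if `s·n` is odd, `N - 1 ≤ N_{s,n}` and `2j ≡ N_{s,n} (mod N)`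
with `0 ≤ j < N`, then `M_{s,n,N}(j) = 0`. -/
theorem stmt3 (s n N : ℕ) (hs : 0 < s) (hn : 0 < n) (hN : 0 < N) (hodd : Odd (s * n))
    (hNle : N - 1 ≤ Nsn s n) (j : ℕ) (hj : j < N) (hcong : 2 * j ≡ Nsn s n [MOD N]) :
    M s n N j = 0 :=
  stmt3_general s n N hodd j hcong
end
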